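/- arXiv:1312.0020 — 2 statements merged into one kernel-verified Lean document; each statement's English description precedes it below -/
import Mathlib

section
/- Let X be a real-valued random variable with cumulative distribution function F, survival function F̄ = 1 − F, and let α > 0. Define the quantile function b(u) = inf{t ∈ ℝ : F(t) ≥ 1 − 1/u} for u > 1. Then F̄ is regularly varying at infinity with index −α if and only if for every x > 0, n·F̄(b(n)·x) → x^{−α} as n → ∞. (This is the pointwise form of the vague convergence n·P(X / F^{-1}(1−1/n) ∈ ·) → μ_α, where μ_α((x,∞]) = x^{−α}.) -/
open MeasureTheory Filter

/-- A function `U : ℝ → ℝ` is regularly varying at infinity with index `ρ` if it is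
eventually positive and `U (t*x) / U t → x ^ ρ` as `t → ∞`, for every `x > 0`. -/
def RegularlyVarying (U : ℝ → ℝ) (ρ : ℝ) : Prop :=
  (∀ᶠ t in atTop, 0 < U t) ∧
  ∀ x : ℝ, 0 < x → Tendsto (fun t => U (t * x) / U t) atTop (nhds (x ^ ρ))

/-!
Let `b n` be the `(1 - 1/n)`-quantile of `F`, so that `n F̄(b n) ≤ 1 ≤ n F̄(t)` for `t < b n`.
If `F̄` is regularly varying, these bounds together with `F̄(c b n) / F̄(b n) → c^(-α)` for `c < 1`
force `n F̄(b n) → 1`, and then `n F̄(x b n) = n F̄(b n) · F̄(x b n) / F̄(b n) → x^(-α)`.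
Conversely, the sequential limits make `b n → ∞`, and for `b k ≤ t < b (k+1)` monotonicity of `F̄`
squeezes `F̄(t x) / F̄(t)` between `F̄(b (k+1) x) / F̄(b k)` and `F̄(b k x) / F̄(b (k+1))`, both of
which tend to `x^(-α)` since `(k+1)/k → 1`.
-/

open Set Topology ProbabilityTheory

lemma tendsto_div_add_of_tendsto_natCast_mul {f g : ℕ → ℝ} {L M : ℝ}
    (hf : Tendsto (fun n : ℕ => n * f n) atTop (𝓝 L))
    (hg : Tendsto (fun n : ℕ => n * g n) atTop (𝓝 M)) (hM : M ≠ 0) (i j : ℕ) :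
    Tendsto (fun n => f (n + i) / g (n + j)) atTop (𝓝 (L / M)) := by
  have hlim := ((hf.comp (tendsto_add_atTop_nat i)).div (hg.comp (tendsto_add_atTop_nat j)) hM).mul
    (tendsto_add_mul_div_add_mul_atTop_nhds (j : ℝ) i 1 one_ne_zero)
  rw [div_one, mul_one] at hlim
  refine hlim.congr' ?_
  filter_upwards [eventually_ge_atTop 1] with n hn
  have hni : (n : ℝ) + i ≠ 0 := by positivity
  have hnj : (n : ℝ) + j ≠ 0 := by positivity
  simp only [Function.comp_apply, Pi.div_apply, Nat.cast_add]
  rcases eq_or_ne (g (n + j)) 0 with hg0 | hg0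
  · simp [hg0]
  · field_simp
    ring

lemma exists_tendsto_atTop_bracket {a : ℕ → ℝ} (ha : Tendsto a atTop atTop) :
    ∃ k : ℝ → ℕ, Tendsto k atTop atTop ∧ ∀ᶠ t in atTop, a (k t) ≤ t ∧ t < a (k t + 1) := by
  have hbdd : ∀ t, BddAbove {n | a n ≤ t} := fun t => by
    obtain ⟨N, hN⟩ := eventually_atTop.1 (ha.eventually_gt_atTop t)
    exact ⟨N, fun n hn => not_lt.1 fun h => (hN n h.le).not_ge hn⟩
  refine ⟨fun t => sSup {n | a n ≤ t}, tendsto_atTop.2 fun N => ?_, ?_⟩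
  · filter_upwards [eventually_ge_atTop (a N)] with t ht using le_csSup (hbdd t) ht
  · filter_upwards [eventually_ge_atTop (a 0)] with t ht
    exact ⟨Nat.sSup_mem ⟨0, ht⟩ (hbdd t),
      not_le.1 fun h => (le_csSup (hbdd t) h).not_gt (Nat.lt_succ_self _)⟩

section RegularVariation

variable {U : ℝ → ℝ} {ρ : ℝ} {a : ℕ → ℝ}

lemma RegularlyVarying.tendsto_natCast_mul_apply (hU : RegularlyVarying U ρ)
    (ha : Tendsto a atTop atTop) (hle : ∀ᶠ n : ℕ in atTop, n * U (a n) ≤ 1)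
    (hge : ∀ᶠ n : ℕ in atTop, ∀ t < a n, 1 ≤ n * U t) :
    Tendsto (fun n : ℕ => n * U (a n)) atTop (𝓝 1) := by
  refine tendsto_order.2 ⟨fun r hr => ?_, fun r hr => hle.mono fun n hn => hn.trans_lt hr⟩
  obtain ⟨c, hrc, hc0, hc1⟩ : ∃ c : ℝ, r < c ^ (-ρ) ∧ 0 < c ∧ c < 1 := by
    have hcont : Tendsto (fun c : ℝ => c ^ (-ρ)) (𝓝[<] 1) (𝓝 1) := by
      simpa using ((Real.continuousAt_rpow_const 1 (-ρ) (Or.inl one_ne_zero)).tendsto).mono_left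
        nhdsWithin_le_nhds
    exact ((hcont.eventually (eventually_gt_nhds hr)).and (Ioo_mem_nhdsLT zero_lt_one)).exists
  have hratio : Tendsto (fun n => U (a n) / U (a n * c)) atTop (𝓝 (c ^ (-ρ))) := by
    have hinv := ((hU.2 c hc0).comp ha).inv₀ (Real.rpow_pos_of_pos hc0 ρ).ne'
    simpa only [Function.comp_apply, inv_div, ← Real.rpow_neg hc0.le] using hinv
  filter_upwards [hratio.eventually (eventually_gt_nhds hrc), hge, ha.eventually hU.1,
    (ha.atTop_mul_const hc0).eventually hU.1, ha.eventually_gt_atTop 0]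
    with n hrn hgen hUa hUac ha0
  calc r < U (a n) / U (a n * c) := hrn
    _ ≤ (n * U (a n * c)) * (U (a n) / U (a n * c)) :=
      le_mul_of_one_le_left (by positivity) (hgen _ (mul_lt_of_lt_one_right ha0 hc1))
    _ = n * U (a n) := by field_simp

theorem RegularlyVarying.tendsto_natCast_mul_apply_mul (hU : RegularlyVarying U ρ)
    (ha : Tendsto a atTop atTop) (hle : ∀ᶠ n : ℕ in atTop, n * U (a n) ≤ 1)
    (hge : ∀ᶠ n : ℕ in atTop, ∀ t < a n, 1 ≤ n * U t) (x : ℝ) (hx : 0 < x) :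
    Tendsto (fun n : ℕ => n * U (a n * x)) atTop (𝓝 (x ^ ρ)) := by
  have hlim := (hU.tendsto_natCast_mul_apply ha hle hge).mul ((hU.2 x hx).comp ha)
  rw [one_mul] at hlim
  refine hlim.congr' ?_
  filter_upwards [ha.eventually hU.1] with n hn
  simp only [Function.comp_apply]
  field_simp

lemma eventually_pos_of_tendsto_natCast_mul (hU : Antitone U) (hρ : ρ < 0)
    (h : ∀ x : ℝ, 0 < x → Tendsto (fun n : ℕ => n * U (a n * x)) atTop (𝓝 (x ^ ρ))) :
    ∀ᶠ n in atTop, 0 < a n := by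
  have hlt : (2 : ℝ) ^ ρ < 1 ^ ρ := by
    rw [Real.one_rpow]
    exact Real.rpow_lt_one_of_one_lt_of_neg one_lt_two hρ
  filter_upwards [(h 2 two_pos).eventually_lt (h 1 one_pos) hlt] with n hn
  by_contra! ha
  exact hn.not_ge (mul_le_mul_of_nonneg_left (hU (by linarith)) n.cast_nonneg)

lemma pos_of_tendsto_natCast_mul (hU : Antitone U) {c : ℝ} (hc : 0 < c)
    (hac : ∀ᶠ n in atTop, c ≤ a n)
    (h : ∀ x : ℝ, 0 < x → Tendsto (fun n : ℕ => n * U (a n * x)) atTop (𝓝 (x ^ ρ))) (t : ℝ) :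
    0 < U t := by
  set x := max 1 (t / c)
  have hx : 0 < x := lt_max_of_lt_left one_pos
  have htx : t ≤ c * x := (div_le_iff₀' hc).1 (le_max_right _ _)
  obtain ⟨n, hn, hcn⟩ :=
    (((h x hx).eventually (eventually_gt_nhds (Real.rpow_pos_of_pos hx ρ))).and hac).exists
  exact (pos_of_mul_pos_right hn n.cast_nonneg).trans_le
    (hU (htx.trans (mul_le_mul_of_nonneg_right hcn hx.le)))

theorem regularlyVarying_of_tendsto_natCast_mul (hU : Antitone U) (ha : Tendsto a atTop atTop)
    (h : ∀ x : ℝ, 0 < x → Tendsto (fun n : ℕ => n * U (a n * x)) atTop (𝓝 (x ^ ρ))) :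
    RegularlyVarying U ρ := by
  have hpos := pos_of_tendsto_natCast_mul hU one_pos (ha.eventually_ge_atTop 1) h
  refine ⟨Eventually.of_forall hpos, fun x hx => ?_⟩
  obtain ⟨k, hk, hbracket⟩ := exists_tendsto_atTop_bracket ha
  have hone : Tendsto (fun n : ℕ => n * U (a n)) atTop (𝓝 1) := by simpa using h 1 one_pos
  have hupper := (tendsto_div_add_of_tendsto_natCast_mul (h x hx) hone one_ne_zero 0 1).comp hk
  have hlower := (tendsto_div_add_of_tendsto_natCast_mul (h x hx) hone one_ne_zero 1 0).comp hk
  simp only [div_one, add_zero] at hupper hlower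
  refine tendsto_of_tendsto_of_tendsto_of_le_of_le' hlower hupper ?_ ?_ <;>
    filter_upwards [hbracket] with t ⟨hle, hlt⟩
  · exact div_le_div₀ (hpos _).le (hU (mul_le_mul_of_nonneg_right hlt.le hx.le)) (hpos t) (hU hle)
  · exact div_le_div₀ (hpos _).le (hU (mul_le_mul_of_nonneg_right hle hx.le)) (hpos _) (hU hlt.le)

end RegularVariation

noncomputable def quantile (F : ℝ → ℝ) (p : ℝ) : ℝ := sInf {t | p ≤ F t}

section Quantile

variable {ν : Measure ℝ} {p q t : ℝ}

lemma quantile_cdf_le_iff (hp0 : 0 < p) (hp1 : p < 1) :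
    quantile (cdf ν) p ≤ t ↔ p ≤ cdf ν t := by
  have hne : {s | p ≤ cdf ν s}.Nonempty :=
    ((tendsto_cdf_atTop ν).eventually (eventually_gt_nhds hp1)).exists.imp fun _ => le_of_lt
  have hbdd : BddBelow {s | p ≤ cdf ν s} := by
    obtain ⟨s₀, hs₀⟩ := ((tendsto_cdf_atBot ν).eventually (eventually_lt_nhds hp0)).exists
    exact ⟨s₀, fun s hs => le_of_not_gt fun hlt => (hs.trans (monotone_cdf ν hlt.le)).not_gt hs₀⟩
  refine ⟨fun h => ?_, fun h => csInf_le hbdd h⟩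
  have hright : ∀ s > t, p ≤ cdf ν s := fun s hs => by
    obtain ⟨u, hu, hus⟩ := exists_lt_of_csInf_lt hne (h.trans_lt hs)
    exact hu.trans (monotone_cdf ν hus.le)
  exact ge_of_tendsto
    (((cdf ν).right_continuous t).mono_left (nhdsWithin_mono _ Ioi_subset_Ici_self))
    (eventually_nhdsWithin_of_forall hright)

lemma quantile_cdf_mono (hp0 : 0 < p) (hpq : p ≤ q) (hq1 : q < 1) :
    quantile (cdf ν) p ≤ quantile (cdf ν) q :=
  (quantile_cdf_le_iff hp0 (hpq.trans_lt hq1)).2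
    (hpq.trans ((quantile_cdf_le_iff (hp0.trans_le hpq) hq1).1 le_rfl))

lemma one_sub_one_div_mem_Ioo {n : ℕ} (hn : 2 ≤ n) : 1 - 1 / (n : ℝ) ∈ Ioo 0 1 := by
  have hn' : (2 : ℝ) ≤ n := by exact_mod_cast hn
  constructor
  · rw [sub_pos, div_lt_one (by linarith)]
    linarith
  · have : 0 < 1 / (n : ℝ) := by positivity
    linarith

lemma quantile_cdf_one_sub_one_div_mono {m n : ℕ} (hm : 2 ≤ m) (hmn : m ≤ n) :
    quantile (cdf ν) (1 - 1 / m) ≤ quantile (cdf ν) (1 - 1 / n) :=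
  quantile_cdf_mono (one_sub_one_div_mem_Ioo hm).1 (by gcongr)
    (one_sub_one_div_mem_Ioo (hm.trans hmn)).2

lemma natCast_mul_one_sub_cdf_quantile_le {n : ℕ} (hn : 2 ≤ n) :
    n * (1 - cdf ν (quantile (cdf ν) (1 - 1 / n))) ≤ 1 := by
  obtain ⟨h0, h1⟩ := one_sub_one_div_mem_Ioo hn
  have hle := (quantile_cdf_le_iff (ν := ν) h0 h1).1 le_rfl
  rw [← le_div_iff₀' (by positivity)]
  linarith

lemma one_le_natCast_mul_one_sub_cdf {n : ℕ} (hn : 2 ≤ n)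
    (ht : t < quantile (cdf ν) (1 - 1 / n)) : 1 ≤ n * (1 - cdf ν t) := by
  obtain ⟨h0, h1⟩ := one_sub_one_div_mem_Ioo hn
  have hlt := (not_congr (quantile_cdf_le_iff (ν := ν) (t := t) h0 h1)).1 ht.not_ge
  rw [← div_le_iff₀' (by positivity)]
  linarith

lemma tendsto_quantile_cdf_atTop (h : ∀ t, cdf ν t < 1) :
    Tendsto (fun n : ℕ => quantile (cdf ν) (1 - 1 / n)) atTop atTop := by
  have hlev : Tendsto (fun n : ℕ => 1 - 1 / (n : ℝ)) atTop (𝓝 1) := by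
    simpa using tendsto_const_nhds.sub (tendsto_one_div_atTop_nhds_zero_nat (𝕜 := ℝ))
  refine tendsto_atTop.2 fun M => ?_
  filter_upwards [hlev.eventually (eventually_gt_nhds (h M)), eventually_ge_atTop 2] with n hn h2
  obtain ⟨h0, h1⟩ := one_sub_one_div_mem_Ioo h2
  exact le_of_not_ge fun hle => ((quantile_cdf_le_iff h0 h1).1 hle).not_gt hn

theorem regularlyVarying_one_sub_cdf_iff {α : ℝ} (hα : 0 < α) :
    RegularlyVarying (fun t => 1 - cdf ν t) (-α) ↔
      ∀ x : ℝ, 0 < x → Tendsto (fun n : ℕ => n * (1 - cdf ν (quantile (cdf ν) (1 - 1 / n) * x)))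
        atTop (𝓝 (x ^ (-α))) := by
  have hanti : Antitone fun t => 1 - cdf ν t := fun s t hst =>
    sub_le_sub_left (monotone_cdf ν hst) 1
  constructor
  · intro hrv
    have hlt : ∀ t, cdf ν t < 1 := fun t => by
      obtain ⟨s, hs, hts⟩ := (hrv.1.and (eventually_ge_atTop t)).exists
      exact (monotone_cdf ν hts).trans_lt (sub_pos.1 hs)
    exact hrv.tendsto_natCast_mul_apply_mul (tendsto_quantile_cdf_atTop hlt)
      ((eventually_ge_atTop 2).mono fun n hn => natCast_mul_one_sub_cdf_quantile_le hn)
      ((eventually_ge_atTop 2).mono fun n hn t ht => one_le_natCast_mul_one_sub_cdf hn ht)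
  · intro h
    -- `α > 0` makes `b n` eventually positive, which forces `F̄ > 0` and hence `b n → ∞`.
    obtain ⟨N, hN2, hN⟩ := ((eventually_ge_atTop 2).and
      (eventually_pos_of_tendsto_natCast_mul hanti (neg_neg_of_pos hα) h)).exists
    have hpos := pos_of_tendsto_natCast_mul hanti hN
      ((eventually_ge_atTop N).mono fun n => quantile_cdf_one_sub_one_div_mono hN2) h
    exact regularlyVarying_of_tendsto_natCast_mul hanti
      (tendsto_quantile_cdf_atTop fun t => sub_pos.1 (hpos t)) h

end Quantile

/-- The survival function `F̄ = 1 - F` is regularly varying at infinity with index `-α`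
iff `n * F̄(b(n) * x) → x ^ (-α)` for every `x > 0`, where
`b(u) = inf {t | F t ≥ 1 - 1/u}` is the `(1 - 1/u)`-quantile of `F`. -/
theorem stmt1 {Ω : Type*} [MeasurableSpace Ω] (μ : Measure Ω) [IsProbabilityMeasure μ]
    (X : Ω → ℝ) (hX : Measurable X)
    (F Fbar : ℝ → ℝ)
    (hF : ∀ x, F x = (μ {ω | X ω ≤ x}).toReal)
    (hFbar : ∀ x, Fbar x = 1 - F x)
    (α : ℝ) (hα : 0 < α)
    (b : ℕ → ℝ) (hb : ∀ n : ℕ, b n = sInf {t : ℝ | 1 - 1 / (n : ℝ) ≤ F t}) :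
    RegularlyVarying Fbar (-α) ↔
      ∀ x : ℝ, 0 < x →
        Tendsto (fun n : ℕ => (n : ℝ) * Fbar (b n * x)) atTop (nhds (x ^ (-α))) := by
  have : IsProbabilityMeasure (μ.map X) := Measure.isProbabilityMeasure_map hX.aemeasurable
  obtain rfl : F = cdf (μ.map X) := funext fun x => by
    rw [hF, cdf_eq_real, measureReal_def, Measure.map_apply hX measurableSet_Iic]
    rfl
  obtain rfl : Fbar = fun x => 1 - cdf (μ.map X) x := funext hFbar
  obtain rfl : b = fun n : ℕ => quantile (cdf (μ.map X)) (1 - 1 / n) := funext hb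
  exact regularlyVarying_one_sub_cdf_iff hα
end

section
/- Let n ≥ 1 and let W be a symmetric n×n real matrix with nonnegative entries, D the diagonal degree matrix with d_i = Σ_j W_{ij}, and L = D − W the graph Laplacian. Assume every degree is strictly positive: d_i > 0 for all i. Define the normalized graph Laplacian L_sym = D^{−1/2} L D^{−1/2}. Let G be the simple graph on {1,…,n} in which distinct vertices i and j are adjacent if and only if W_{ij} > 0, and let A_1, …, A_k be its connected components. Then L_sym is symmetric and positive semidefinite, and the kernel of L_sym is exactly the linear span of the vectors D^{1/2}·𝟙_{A_1}, …, D^{1/2}·𝟙_{A_k}. In particular, the multiplicity of the eigenvalue 0 of L_sym equals k, the number of connected components of G. -/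
/-!
The quadratic form of `L = D - W` is `x ↦ ½ ∑ᵢⱼ Wᵢⱼ (xᵢ - xⱼ)²`, so `L`, and with it its congruence
`L_sym = D^{-1/2} L D^{-1/2}`, is positive semidefinite. For a positive semidefinite matrix,
`L x = 0` iff `xᵀ L x = 0`, i.e. iff `x` is constant across every edge of positive weight, hence
constant on connected components. As `D^{-1/2}` is invertible, `ker L_sym = D^{1/2} ker L` is
spanned by the vectors `D^{1/2} 𝟙_A`, which are linearly independent because the components are
nonempty and pairwise disjoint.
-/

open Matrix

def simGraph {n : ℕ} (W : Matrix (Fin n) (Fin n) ℝ) (hW : W.IsSymm) :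
    SimpleGraph (Fin n) where
  Adj i j := i ≠ j ∧ 0 < W i j
  symm := ⟨fun i j h => ⟨h.1.symm, hW.apply i j ▸ h.2⟩⟩
  loopless := ⟨fun i h => h.1 rfl⟩

section WeightedLaplacian

variable {ι : Type*} [Fintype ι] [DecidableEq ι] {W : Matrix ι ι ℝ}

def weightedLaplacian (W : Matrix ι ι ℝ) : Matrix ι ι ℝ :=
  diagonal (fun i => ∑ j, W i j) - W

lemma weightedLaplacian_mulVec_apply (x : ι → ℝ) (i : ι) :
    (weightedLaplacian W *ᵥ x) i = ∑ j, W i j * (x i - x j) := by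
  rw [weightedLaplacian, sub_mulVec, Pi.sub_apply, mulVec_diagonal, Finset.sum_mul, mulVec,
    dotProduct, ← Finset.sum_sub_distrib]
  simp only [mul_sub]

lemma dotProduct_weightedLaplacian_mulVec (hW : W.IsSymm) (x : ι → ℝ) :
    x ⬝ᵥ (weightedLaplacian W *ᵥ x) = (∑ i, ∑ j, W i j * (x i - x j) ^ 2) / 2 := by
  have hswap : ∑ i, ∑ j, x i * (W i j * (x i - x j)) =
      ∑ i, ∑ j, x j * (W i j * (x j - x i)) := by
    rw [Finset.sum_comm]
    simp_rw [hW.apply]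
  have hsq : ∑ i, ∑ j, W i j * (x i - x j) ^ 2 =
      ∑ i, ∑ j, (x i * (W i j * (x i - x j)) + x j * (W i j * (x j - x i))) := by
    congr! 2 with i - j -
    ring
  simp only [dotProduct, weightedLaplacian_mulVec_apply, Finset.mul_sum]
  rw [hsq, Finset.sum_congr rfl fun i _ => Finset.sum_add_distrib, Finset.sum_add_distrib, ← hswap]
  ring

lemma isHermitian_weightedLaplacian (hW : W.IsSymm) : (weightedLaplacian W).IsHermitian := by
  rw [IsHermitian, conjTranspose_eq_transpose_of_trivial, weightedLaplacian, transpose_sub,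
    diagonal_transpose, hW.eq]

lemma posSemidef_weightedLaplacian (hW : W.IsSymm) (hnonneg : ∀ i j, 0 ≤ W i j) :
    (weightedLaplacian W).PosSemidef := by
  refine .of_dotProduct_mulVec_nonneg (isHermitian_weightedLaplacian hW) fun x => ?_
  rw [star_trivial, dotProduct_weightedLaplacian_mulVec hW]
  exact div_nonneg (Finset.sum_nonneg fun i _ => Finset.sum_nonneg fun j _ =>
    mul_nonneg (hnonneg i j) (sq_nonneg _)) zero_le_two

lemma weightedLaplacian_mulVec_eq_zero_iff (hW : W.IsSymm) (hnonneg : ∀ i j, 0 ≤ W i j)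
    (x : ι → ℝ) : weightedLaplacian W *ᵥ x = 0 ↔ ∀ i j, 0 < W i j → x i = x j := by
  constructor
  · intro hx
    have hnn : ∀ i j, 0 ≤ W i j * (x i - x j) ^ 2 := fun i j =>
      mul_nonneg (hnonneg i j) (sq_nonneg _)
    have hquad : ∑ i, ∑ j, W i j * (x i - x j) ^ 2 = 0 := by
      have := ((posSemidef_weightedLaplacian hW hnonneg).dotProduct_mulVec_zero_iff x).2 hx
      rw [star_trivial, dotProduct_weightedLaplacian_mulVec hW] at this
      linarith
    have hterm : ∀ i j, W i j * (x i - x j) ^ 2 = 0 := by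
      simpa [Finset.sum_eq_zero_iff_of_nonneg, Finset.sum_nonneg, hnn] using hquad
    intro i j hij
    simpa [hij.ne', sub_eq_zero] using hterm i j
  · intro h
    funext i
    rw [weightedLaplacian_mulVec_apply, Pi.zero_apply]
    refine Finset.sum_eq_zero fun j _ => ?_
    rcases (hnonneg i j).eq_or_lt with hij | hij
    · rw [← hij, zero_mul]
    · rw [h i j hij, sub_self, mul_zero]

end WeightedLaplacian

namespace SimpleGraph

variable {V : Type*} {G : SimpleGraph V}

lemma forall_reachable_eq_of_forall_adj_eq {β : Type*} {x : V → β}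
    (h : ∀ i j, G.Adj i j → x i = x j) (i j : V) (hij : G.Reachable i j) : x i = x j := by
  obtain ⟨w⟩ := hij
  induction w with
  | nil => rfl
  | cons hadj _ ih => exact (h _ _ hadj).trans ih

lemma exists_eq_comp_connectedComponentMk_iff {β : Type*} {x : V → β} :
    (∃ f : G.ConnectedComponent → β, x = f ∘ G.connectedComponentMk) ↔
      ∀ i j, G.Reachable i j → x i = x j := by
  refine ⟨?_, fun h => ⟨ConnectedComponent.lift x fun i j p _ => h i j p.reachable, rfl⟩⟩
  rintro ⟨f, rfl⟩ i j hij
  exact congrArg f (ConnectedComponent.sound hij)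

namespace ConnectedComponent

noncomputable def weightedIndicator (s : V → ℝ) (c : G.ConnectedComponent) : V → ℝ :=
  fun i => s i * Set.indicator {j | G.connectedComponentMk j = c} (fun _ => (1 : ℝ)) i

variable [Fintype G.ConnectedComponent]

lemma sum_smul_weightedIndicator (s : V → ℝ) (f : G.ConnectedComponent → ℝ) :
    ∑ c, f c • weightedIndicator s c = fun i => s i * f (G.connectedComponentMk i) := by
  classical
  funext i
  simp [weightedIndicator, Finset.sum_apply, Set.indicator_apply, mul_comm]

lemma mem_span_range_weightedIndicator_iff (s : V → ℝ) (y : V → ℝ) :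
    y ∈ Submodule.span ℝ (Set.range (weightedIndicator (G := G) s)) ↔
      ∃ f : G.ConnectedComponent → ℝ, y = fun i => s i * f (G.connectedComponentMk i) := by
  simp only [Submodule.mem_span_range_iff_exists_fun, sum_smul_weightedIndicator, eq_comm]

lemma linearIndependent_weightedIndicator {s : V → ℝ} (hs : ∀ i, s i ≠ 0) :
    LinearIndependent ℝ (weightedIndicator (G := G) s) := by
  refine Fintype.linearIndependent_iff.2 fun f hf c => ?_
  obtain ⟨i, rfl⟩ := c.exists_rep
  have := congrFun ((sum_smul_weightedIndicator s f).symm.trans hf) i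
  exact (mul_eq_zero.1 this).resolve_left (hs i)

end ConnectedComponent

end SimpleGraph

namespace Matrix

variable {ι R : Type*} [Fintype ι] [DecidableEq ι]

lemma PosSemidef.diagonal_mul_mul_diagonal [CommRing R] [PartialOrder R] [StarRing R]
    [StarOrderedRing R] [TrivialStar R] {A : Matrix ι ι R} (hA : A.PosSemidef) (d : ι → R) :
    (diagonal d * A * diagonal d).PosSemidef := by
  simpa [diagonal_conjTranspose] using hA.conjTranspose_mul_mul_same (diagonal d)

lemma diagonal_mul_mul_diagonal_mulVec_eq_zero_iff [CommRing R] [NoZeroDivisors R] {d : ι → R}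
    (hd : ∀ i, d i ≠ 0) (A : Matrix ι ι R) (y : ι → R) :
    (diagonal d * A * diagonal d) *ᵥ y = 0 ↔ A *ᵥ (fun i => d i * y i) = 0 := by
  have hdy : diagonal d *ᵥ y = fun i => d i * y i := funext (mulVec_diagonal d y)
  rw [← mulVec_mulVec, ← mulVec_mulVec, hdy, funext_iff, funext_iff]
  simp only [mulVec_diagonal, Pi.zero_apply, mul_eq_zero, hd, false_or]

end Matrix

lemma forall_reachable_simGraph_imp_eq_iff {n : ℕ} {W : Matrix (Fin n) (Fin n) ℝ} (hW : W.IsSymm)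
    {β : Type*} (x : Fin n → β) :
    (∀ i j, (simGraph W hW).Reachable i j → x i = x j) ↔ ∀ i j, 0 < W i j → x i = x j := by
  refine ⟨fun h i j hij => ?_, fun h => SimpleGraph.forall_reachable_eq_of_forall_adj_eq
    fun i j hadj => h i j hadj.2⟩
  by_cases hne : i = j
  · rw [hne]
  · exact h i j (SimpleGraph.Adj.reachable (G := simGraph W hW) ⟨hne, hij⟩)

open SimpleGraph.ConnectedComponent in
lemma ker_toLin'_normalizedLaplacian {n : ℕ} {W : Matrix (Fin n) (Fin n) ℝ} (hW : W.IsSymm)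
    (hnonneg : ∀ i j, 0 ≤ W i j) [Fintype (simGraph W hW).ConnectedComponent] {s : Fin n → ℝ}
    (hs : ∀ i, s i ≠ 0) :
    LinearMap.ker (toLin' (diagonal (fun i => (s i)⁻¹) * weightedLaplacian W *
      diagonal (fun i => (s i)⁻¹))) =
      Submodule.span ℝ (Set.range (weightedIndicator (G := simGraph W hW) s)) := by
  ext y
  rw [LinearMap.mem_ker, toLin'_apply,
    diagonal_mul_mul_diagonal_mulVec_eq_zero_iff (fun i => inv_ne_zero (hs i)),
    weightedLaplacian_mulVec_eq_zero_iff hW hnonneg, ← forall_reachable_simGraph_imp_eq_iff hW,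
    ← SimpleGraph.exists_eq_comp_connectedComponentMk_iff, mem_span_range_weightedIndicator_iff]
  simp only [funext_iff, Function.comp_apply, inv_mul_eq_iff_eq_mul₀ (hs _)]

theorem stmt11_general {n : ℕ} (W : Matrix (Fin n) (Fin n) ℝ)
    (hsymm : W.IsSymm) (hnonneg : ∀ i j, 0 ≤ W i j)
    (deg : Fin n → ℝ) (hdeg : ∀ i, deg i = ∑ j, W i j)
    (hpos : ∀ i, 0 < deg i)
    (D L Lsym : Matrix (Fin n) (Fin n) ℝ)
    (hD : D = Matrix.diagonal deg)
    (hL : L = D - W)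
    (hLsym : Lsym =
      (Matrix.diagonal fun i => (Real.sqrt (deg i))⁻¹) * L *
        (Matrix.diagonal fun i => (Real.sqrt (deg i))⁻¹)) :
    Lsym.PosSemidef ∧
    LinearMap.ker (Matrix.toLin' Lsym) =
      Submodule.span ℝ
        {v : Fin n → ℝ | ∃ c : (simGraph W hsymm).ConnectedComponent,
          v = fun i => Real.sqrt (deg i) *
            Set.indicator {j | (simGraph W hsymm).connectedComponentMk j = c}
              (fun _ => (1 : ℝ)) i} ∧
    Module.finrank ℝ (LinearMap.ker (Matrix.toLin' Lsym)) =
      Nat.card (simGraph W hsymm).ConnectedComponent := by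
  subst hD hL hLsym
  rw [show diagonal deg - W = weightedLaplacian W by rw [weightedLaplacian, ← funext hdeg]]
  have hs : ∀ i, Real.sqrt (deg i) ≠ 0 := fun i => (Real.sqrt_pos.2 (hpos i)).ne'
  have hker := ker_toLin'_normalizedLaplacian hsymm hnonneg hs
  refine ⟨(posSemidef_weightedLaplacian hsymm hnonneg).diagonal_mul_mul_diagonal _,
    hker.trans (congrArg _ (Set.ext fun _ => exists_congr fun _ => eq_comm)), ?_⟩
  rw [hker, Nat.card_eq_fintype_card, finrank_span_eq_card
    (SimpleGraph.ConnectedComponent.linearIndependent_weightedIndicator hs)]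

/-- For strictly positive degrees, the normalized graph Laplacian
`L_sym = D^{-1/2} L D^{-1/2}` is symmetric positive semidefinite and its kernel is exactly
the span of the vectors `D^{1/2} 𝟙_{A_c}`, where the `A_c` are the connected components of
the similarity graph; in particular the multiplicity of the eigenvalue `0` of `L_sym`
equals the number of connected components. -/
theorem stmt11 {n : ℕ} (hn : 1 ≤ n) (W : Matrix (Fin n) (Fin n) ℝ)
    (hsymm : W.IsSymm) (hnonneg : ∀ i j, 0 ≤ W i j)
    (deg : Fin n → ℝ) (hdeg : ∀ i, deg i = ∑ j, W i j)
    (hpos : ∀ i, 0 < deg i)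
    (D L Lsym : Matrix (Fin n) (Fin n) ℝ)
    (hD : D = Matrix.diagonal deg)
    (hL : L = D - W)
    (hLsym : Lsym =
      (Matrix.diagonal fun i => (Real.sqrt (deg i))⁻¹) * L *
        (Matrix.diagonal fun i => (Real.sqrt (deg i))⁻¹)) :
    Lsym.PosSemidef ∧
    LinearMap.ker (Matrix.toLin' Lsym) =
      Submodule.span ℝ
        {v : Fin n → ℝ | ∃ c : (simGraph W hsymm).ConnectedComponent,
          v = fun i => Real.sqrt (deg i) *
            Set.indicator {j | (simGraph W hsymm).connectedComponentMk j = c}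
              (fun _ => (1 : ℝ)) i} ∧
    Module.finrank ℝ (LinearMap.ker (Matrix.toLin' Lsym)) =
      Nat.card (simGraph W hsymm).ConnectedComponent :=
  stmt11_general W hsymm hnonneg deg hdeg hpos D L Lsym hD hL hLsym
end
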